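/- Let S be a Gorenstein ring, f_1,…,f_n a regular sequence in S, g_1,…,g_c a regular sequence contained in (f_1,…,f_n) with g_j = Σ_i a_{ij} f_i, R = S/(g_1,…,g_c), M = S/(f_1,…,f_n). Let α ∈ ⋀^c S^n be the image of a generator of ⋀^c S^c under ⋀^c A. Then exterior multiplication by α defines a morphism of complexes φ': R ⊗ K → (R ⊗ K)[−c] on the Koszul complex K of f_1,…,f_n which induces an isomorphism M = H_0(R ⊗ K) → H_c(R ⊗ K) = Tor^S_c(R, M); identifying (R⊗K)[−c] with (R ⊗ K^*)[c] via a choice of generator of ⋀^n S^n, φ' induces an isomorphism H_0(R⊗K) → H_0((R⊗K^*)[c]). -/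

import Mathlib

/-!
Write `G_k = (g_1, …, g_k)` and `T_k = τ_1 ∘ ⋯ ∘ τ_k`. From `dτ_j + τ_j d = g_j` one gets
`d T_k ≡ (-1)^k T_k d` modulo `G_k`, which is the morphism of complexes. That `T_k` induces
`H₀(K/G_k K) ≅ H_k(K/G_k K)` is proved by induction on `k`, along the short exact sequence
`0 → K/G_k K → K/G_k K → K/G_{k+1} K → 0` given by multiplication by `g_{k+1}`: regularity of
`g_{k+1}` on `K/G_k K` (the `K i` are free) gives `H_i(K/G_k K) = 0` for `i > k`, so the connecting
map `H_{k+1}(K/G_{k+1} K) → H_k(K/G_k K)` is an isomorphism, and it sends `T_{k+1} x` to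
`±T_k x` because `d τ_{k+1} = g_{k+1}` on `K₀`.

The graded maps `d` and `τ_j` are assembled into endomorphisms of `⨁ i, K i`, so that the
compositions `T_k` are products in `Module.End` and no casts between the `K (i + k)` arise.
-/

/-- composition, along ascending homological degrees, of a list of degree `+1` maps -/
def compUp {S : Type*} [CommRing S] {K : ℕ → Type*}
    [∀ i, AddCommGroup (K i)] [∀ i, Module S (K i)] {c : ℕ}
    (τ : Fin c → ∀ i : ℕ, K i →ₗ[S] K (i + 1)) :
    (l : List (Fin c)) → ∀ i : ℕ, K i →ₗ[S] K (i + l.length)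
  | [], _ => LinearMap.id
  | a :: l, i => (τ a (i + l.length)) ∘ₗ (compUp τ l i)

/-- transport along an equality of indices -/
def castK {S : Type*} [CommRing S] {K : ℕ → Type*}
    [∀ i, AddCommGroup (K i)] [∀ i, Module S (K i)] {a b : ℕ} (h : a = b) :
    K a →ₗ[S] K b := by subst h; exact LinearMap.id

/-- reduction of a linear map modulo `I` -/
def quotMap {S : Type*} [CommRing S] (I : Ideal S) {A B : Type*}
    [AddCommGroup A] [Module S A] [AddCommGroup B] [Module S B] (φ : A →ₗ[S] B) :
    (A ⧸ (I • (⊤ : Submodule S A))) →ₗ[S] (B ⧸ (I • (⊤ : Submodule S B))) :=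
  Submodule.mapQ _ _ φ (by
    refine Submodule.smul_le.mpr fun r hr m _ => ?_
    simp only [Submodule.mem_comap, map_smul]
    exact Submodule.smul_mem_smul hr Submodule.mem_top)

open DirectSum RingTheory.Sequence

section Regularity

variable {S M : Type*} [CommRing S] [AddCommGroup M] [Module S M]

lemma RingTheory.Sequence.IsWeaklyRegular.of_flat_module {rs : List S}
    (h : IsWeaklyRegular S rs) [Module.Flat S M] : IsWeaklyRegular M rs :=
  ((TensorProduct.rid S M).isWeaklyRegular_congr rs).mp h.isWeaklyRegular_lTensor

lemma mem_of_smul_mem_of_isWeaklyRegular_append {rs : List S} {r : S}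
    (h : IsWeaklyRegular M (rs ++ [r])) {x : M}
    (hx : r • x ∈ Ideal.ofList rs • (⊤ : Submodule S M)) :
    x ∈ Ideal.ofList rs • (⊤ : Submodule S M) :=
  mem_of_isSMulRegular_quotient_of_smul_mem
    ((isWeaklyRegular_singleton_iff _ r).mp ((isWeaklyRegular_append_iff M rs [r]).mp h).2) hx

lemma mem_ofList_append_singleton_smul_top_iff {rs : List S} {r : S} {x : M} :
    x ∈ Ideal.ofList (rs ++ [r]) • (⊤ : Submodule S M) ↔
      ∃ y, x - r • y ∈ Ideal.ofList rs • (⊤ : Submodule S M) := by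
  rw [Ideal.ofList_append, Ideal.ofList_singleton, Submodule.sup_smul,
    Submodule.ideal_span_singleton_smul, Submodule.mem_sup]
  constructor
  · rintro ⟨n, hn, _, ⟨y, -, rfl⟩, rfl⟩
    exact ⟨y, by simpa using hn⟩
  · rintro ⟨y, hy⟩
    exact ⟨_, hy, r • y, Submodule.smul_mem_pointwise_smul _ _ _ trivial, sub_add_cancel _ _⟩

lemma ofList_smul_top_le_append (rs rs' : List S) :
    Ideal.ofList rs • (⊤ : Submodule S M) ≤ Ideal.ofList (rs ++ rs') • ⊤ :=
  Submodule.smul_mono_left (by simp)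

lemma mem_sup_ofList_append_smul_top {B : Submodule S M} {rs : List S} {r : S} {x y : M}
    (h : x - r • y ∈ B ⊔ Ideal.ofList rs • ⊤) : x ∈ B ⊔ Ideal.ofList (rs ++ [r]) • ⊤ := by
  rw [← sub_add_cancel x (r • y)]
  exact add_mem (sup_le_sup_left (ofList_smul_top_le_append rs [r]) B h)
    (Submodule.mem_sup_right (mem_ofList_append_singleton_smul_top_iff.mpr ⟨y, by simp⟩))

end Regularity

lemma neg_one_pow_zsmul_zsmul {M : Type*} [AddCommGroup M] (n : ℕ) (v : M) :
    ((-1 : ℤ) ^ n) • ((-1 : ℤ) ^ n) • v = v := by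
  rw [smul_smul, ← mul_pow, neg_one_mul, neg_neg, one_pow, one_smul]

section Homotopies

variable {S E ι : Type*} [CommRing S] [AddCommGroup E] [Module S E]
  {D : Module.End S E} {T : ι → Module.End S E} {g : ι → S}

theorem apply_prod_sub_zsmul_prod_apply_mem (hT : ∀ a, D * T a + T a * D = g a • 1)
    (l : List ι) (x : E) :
    D ((l.map T).prod x) - ((-1 : ℤ) ^ l.length) • (l.map T).prod (D x) ∈
      Ideal.ofList (l.map g) • (⊤ : Submodule S E) := by
  induction l with
  | nil => simp
  | cons a l ih =>
    simp only [List.map_cons, List.prod_cons, Module.End.mul_apply, List.length_cons,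
      Ideal.ofList_cons_smul]
    set P := (l.map T).prod
    have hDT : D (T a (P x)) = g a • P x - T a (D (P x)) :=
      eq_sub_of_add_eq (by simpa using congr($(hT a) (P x)))
    have key : D (T a (P x)) - ((-1 : ℤ) ^ (l.length + 1)) • T a (P (D x)) =
        g a • P x - T a (D (P x) - ((-1 : ℤ) ^ l.length) • P (D x)) := by
      rw [hDT, map_sub, map_zsmul, pow_succ, mul_neg_one, neg_smul]
      abel
    rw [key]
    exact Submodule.sub_mem _
      (Submodule.mem_sup_left (Submodule.smul_mem_pointwise_smul _ _ _ Submodule.mem_top))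
      (Submodule.mem_sup_right (Submodule.smul_top_le_comap_smul_top _ (T a) ih))

theorem apply_prod_append_sub_mem (hT : ∀ a, D * T a + T a * D = g a • 1)
    (l : List ι) (a : ι) {x : E} (hx : D x = 0) :
    D (((l ++ [a]).map T).prod x) - ((-1 : ℤ) ^ l.length) • g a • (l.map T).prod x ∈
      Ideal.ofList (l.map g) • (⊤ : Submodule S E) := by
  have hDT : D (T a x) = g a • x := by simpa [hx] using congr($(hT a) x)
  simpa [hDT] using apply_prod_sub_zsmul_prod_apply_mem hT l (T a x)

theorem mem_range_sup_of_prod_mem (hT : ∀ a, D * T a + T a * D = g a • 1)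
    (hD : ∀ v, D (D v) = 0) {l : List ι} (hl : IsWeaklyRegular E (l.map g)) {x : E}
    (hx : D x = 0) (h : (l.map T).prod x ∈ LinearMap.range D ⊔ Ideal.ofList (l.map g) • ⊤) :
    x ∈ LinearMap.range D ⊔ Ideal.ofList (l.map g) • ⊤ := by
  induction l using List.reverseRecOn generalizing x with
  | nil => simpa using h
  | append_singleton l a ih =>
    rw [List.map_append, List.map_singleton] at hl h ⊢
    set G := Ideal.ofList (l.map g) • (⊤ : Submodule S E)
    set P := (l.map T).prod
    set ε := (-1 : ℤ) ^ l.length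
    obtain ⟨_, ⟨u, rfl⟩, y, hy, hPx⟩ := Submodule.mem_sup.mp h
    obtain ⟨q, hq⟩ := mem_ofList_append_singleton_smul_top_iff.mp hy
    -- `D` of `P_{l++[a]} x = D u + (y - g a • q) + g a • q`, against `apply_prod_append_sub_mem`
    have hDq : D q - ε • P x ∈ G := by
      refine mem_of_smul_mem_of_isWeaklyRegular_append hl ?_
      have hDy : D (y - g a • q) = D (((l ++ [a]).map T).prod x) - g a • D q := by
        rw [← hPx, map_sub, map_add, hD, zero_add, map_smul]
      have := Submodule.sub_mem _ (apply_prod_append_sub_mem hT l a hx)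
        (Submodule.smul_top_le_comap_smul_top _ D hq)
      rw [hDy, sub_sub_sub_cancel_left, ← smul_comm] at this
      simpa [smul_sub] using this
    have hεx : ε • x ∈ LinearMap.range D ⊔ G := by
      refine ih ((isWeaklyRegular_append_iff E _ _).mp hl).1 (by rw [map_zsmul, hx, smul_zero]) ?_
      rw [map_zsmul, ← sub_sub_cancel (D q) (ε • P x)]
      exact Submodule.sub_mem _ (Submodule.mem_sup_left ⟨q, rfl⟩) (Submodule.mem_sup_right hDq)
    rw [← neg_one_pow_zsmul_zsmul l.length x]
    exact Submodule.smul_of_tower_mem _ ε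
      (sup_le_sup_left (ofList_smul_top_le_append (M := E) (l.map g) [g a]) _ hεx)
end Homotopies

section QuotMap

variable {S A B C : Type*} [CommRing S] [AddCommGroup A] [Module S A] [AddCommGroup B]
  [Module S B] [AddCommGroup C] [Module S C] (I : Ideal S)

@[simp] lemma quotMap_mk (φ : A →ₗ[S] B) (x : A) :
    quotMap I φ (Submodule.Quotient.mk x) = Submodule.Quotient.mk (φ x) :=
  rfl

lemma quotMap_comp (φ : B →ₗ[S] C) (ψ : A →ₗ[S] B) :
    quotMap I φ ∘ₗ quotMap I ψ = quotMap I (φ ∘ₗ ψ) :=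
  Submodule.linearMap_qext _ rfl

lemma quotMap_zsmul (n : ℤ) (φ : A →ₗ[S] B) : n • quotMap I φ = quotMap I (n • φ) :=
  Submodule.linearMap_qext _
    (LinearMap.ext fun x => (map_zsmul (I • ⊤ : Submodule S B).mkQ n (φ x)).symm)

lemma quotMap_eq_of_sub_mem {φ ψ : A →ₗ[S] B} (h : ∀ x, φ x - ψ x ∈ I • (⊤ : Submodule S B)) :
    quotMap I φ = quotMap I ψ :=
  Submodule.linearMap_qext _ (LinearMap.ext fun x => (Submodule.Quotient.eq _).mpr (h x))

lemma quotMap_eq_zero_of_mem {φ : A →ₗ[S] B} (h : ∀ x, φ x ∈ I • (⊤ : Submodule S B)) :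
    quotMap I φ = 0 :=
  Submodule.linearMap_qext _
    (LinearMap.ext fun x => (Submodule.Quotient.mk_eq_zero _).mpr (h x))

lemma mk_mem_range_quotMap_iff (φ : A →ₗ[S] B) (y : B) :
    (Submodule.Quotient.mk y : B ⧸ I • (⊤ : Submodule S B)) ∈ LinearMap.range (quotMap I φ) ↔
      ∃ x, y - φ x ∈ I • (⊤ : Submodule S B) := by
  refine ⟨fun ⟨x, hx⟩ => ?_, fun ⟨x, hx⟩ => ⟨Submodule.Quotient.mk x, ?_⟩⟩
  · obtain ⟨x, rfl⟩ := Submodule.Quotient.mk_surjective _ x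
    exact ⟨x, (Submodule.Quotient.eq _).mp hx.symm⟩
  · exact ((Submodule.Quotient.eq _).mpr hx).symm

end QuotMap

section Totalization

variable {S : Type*} [CommRing S] {K : ℕ → Type*} [∀ i, AddCommGroup (K i)]
  [∀ i, Module S (K i)]

def totalDiff (d : ∀ i, K (i + 1) →ₗ[S] K i) : Module.End S (⨁ i, K i) :=
  toModule S ℕ _ fun
    | 0 => 0
    | i + 1 => lof S ℕ K i ∘ₗ d i

def totalShift (t : ∀ i, K i →ₗ[S] K (i + 1)) : Module.End S (⨁ i, K i) :=
  toModule S ℕ _ fun i => lof S ℕ K (i + 1) ∘ₗ t i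

variable {d : ∀ i, K (i + 1) →ₗ[S] K i}

@[simp] lemma totalDiff_lof_zero (y : K 0) : totalDiff d (lof S ℕ K 0 y) = 0 :=
  toModule_lof S _ _

@[simp] lemma totalDiff_lof_succ (i : ℕ) (y : K (i + 1)) :
    totalDiff d (lof S ℕ K (i + 1) y) = lof S ℕ K i (d i y) :=
  toModule_lof S _ _

@[simp] lemma totalShift_lof (t : ∀ i, K i →ₗ[S] K (i + 1)) (i : ℕ) (y : K i) :
    totalShift t (lof S ℕ K i y) = lof S ℕ K (i + 1) (t i y) :=
  toModule_lof S _ _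

lemma component_totalDiff (i : ℕ) (v : ⨁ i, K i) :
    component S ℕ K i (totalDiff d v) = d i (component S ℕ K (i + 1) v) := by
  suffices component S ℕ K i ∘ₗ totalDiff d = d i ∘ₗ component S ℕ K (i + 1) from
    LinearMap.congr_fun this v
  refine linearMap_ext S fun j => LinearMap.ext fun y => ?_
  rcases j with _ | j
  · simp [component.of]
  · by_cases h : j = i
    · subst h; simp [component.lof_self]
    · simp [component.of, h]

lemma totalDiff_totalDiff (hd : ∀ i, LinearMap.range (d (i + 1)) ≤ LinearMap.ker (d i))
    (v : ⨁ i, K i) :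
    totalDiff d (totalDiff d v) = 0 := by
  suffices totalDiff d ∘ₗ totalDiff d = 0 from LinearMap.congr_fun this v
  refine linearMap_ext S fun j => LinearMap.ext fun y => ?_
  rcases j with _ | _ | j
  · simp
  · simp
  · simp [LinearMap.mem_ker.mp (hd j ⟨y, rfl⟩)]

lemma totalDiff_mul_totalShift_add {t : ∀ i, K i →ₗ[S] K (i + 1)} {s : S}
    (ht : ∀ i, d (i + 1) ∘ₗ t (i + 1) + t i ∘ₗ d i = s • LinearMap.id)
    (ht0 : d 0 ∘ₗ t 0 = s • LinearMap.id) :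
    totalDiff d * totalShift t + totalShift t * totalDiff d = s • 1 := by
  refine linearMap_ext S fun j => LinearMap.ext fun y => ?_
  rcases j with _ | j
  · simpa using congr(lof S ℕ K 0 ($ht0 y))
  · simpa using congr(lof S ℕ K (j + 1) ($(ht j) y))

lemma lof_mem_smul_top_iff (I : Ideal S) (i : ℕ) (y : K i) :
    lof S ℕ K i y ∈ I • (⊤ : Submodule S (⨁ i, K i)) ↔ y ∈ I • (⊤ : Submodule S (K i)) := by
  refine ⟨fun h => ?_, fun h => Submodule.smul_top_le_comap_smul_top I _ h⟩
  simpa using Submodule.smul_top_le_comap_smul_top I (component S ℕ K i) h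

-- `range (totalDiff d) ⊔ I • ⊤` is the preimage of the boundaries of `K ⧸ I K`.
lemma lof_mem_range_sup_iff (I : Ideal S) (i : ℕ) (y : K i) :
    lof S ℕ K i y ∈ LinearMap.range (totalDiff d) ⊔ I • ⊤ ↔
      ∃ u, y - d i u ∈ I • (⊤ : Submodule S (K i)) := by
  constructor
  · intro h
    obtain ⟨_, ⟨v, rfl⟩, n, hn, hvn⟩ := Submodule.mem_sup.mp h
    refine ⟨component S ℕ K (i + 1) v, ?_⟩
    have hy : y = d i (component S ℕ K (i + 1) v) + component S ℕ K i n := by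
      simpa [component_totalDiff] using congr(component S ℕ K i $hvn).symm
    rw [hy, add_sub_cancel_left]
    exact Submodule.smul_top_le_comap_smul_top I _ hn
  · rintro ⟨u, hu⟩
    refine Submodule.mem_sup.mpr
      ⟨_, ⟨lof S ℕ K (i + 1) u, rfl⟩, _, (lof_mem_smul_top_iff I i _).mpr hu, ?_⟩
    simp

lemma exists_prod_totalShift_lof_eq {ι : Type*} (τ : ι → ∀ i, K i →ₗ[S] K (i + 1))
    (l : List ι) {i j : ℕ} (h : i + l.length = j) (x : K i) :
    ∃ t : K j, (l.map fun a => totalShift (τ a)).prod (lof S ℕ K i x) = lof S ℕ K j t := by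
  subst h
  induction l with
  | nil => exact ⟨x, rfl⟩
  | cons a l ih =>
    obtain ⟨t, ht⟩ := ih
    refine ⟨τ a _ t, ?_⟩
    rw [List.map_cons, List.prod_cons, Module.End.mul_apply, ht, totalShift_lof]
    rfl

lemma lof_castK {a b : ℕ} (h : a = b) (x : K a) :
    lof S ℕ K b (castK (S := S) h x) = lof S ℕ K a x := by
  subst h; rfl

lemma lof_compUp {c : ℕ} (τ : Fin c → ∀ i, K i →ₗ[S] K (i + 1)) (l : List (Fin c)) (i : ℕ)
    (y : K i) : lof S ℕ K (i + l.length) (compUp τ l i y) =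
      (l.map fun a => totalShift (τ a)).prod (lof S ℕ K i y) := by
  induction l with
  | nil => rfl
  | cons a l ih =>
    rw [List.map_cons, List.prod_cons, Module.End.mul_apply, ← ih, totalShift_lof]
    rfl

lemma exists_sub_smul_mem_of_totalDiff_mem (hd : ∀ v, totalDiff d (totalDiff d v) = 0)
    {rs : List S} {r : S} (hrs : IsWeaklyRegular (⨁ i, K i) (rs ++ [r])) {j : ℕ}
    (z : K (j + 1))
    (hz : totalDiff d (lof S ℕ K (j + 1) z) ∈
      Ideal.ofList (rs ++ [r]) • (⊤ : Submodule S (⨁ i, K i))) :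
    ∃ p : K j, lof S ℕ K j (d j z - r • p) ∈ Ideal.ofList rs • (⊤ : Submodule S (⨁ i, K i)) ∧
      totalDiff d (lof S ℕ K j p) ∈ Ideal.ofList rs • (⊤ : Submodule S (⨁ i, K i)) := by
  rw [totalDiff_lof_succ, lof_mem_smul_top_iff, mem_ofList_append_singleton_smul_top_iff] at hz
  obtain ⟨p, hp⟩ := hz
  have hp' := (lof_mem_smul_top_iff _ j _).mpr hp
  refine ⟨p, hp', mem_of_smul_mem_of_isWeaklyRegular_append hrs ?_⟩
  have e : totalDiff d (lof S ℕ K j (d j z - r • p)) = -(r • totalDiff d (lof S ℕ K j p)) := by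
    rw [map_sub, map_sub, ← totalDiff_lof_succ, hd, map_smul, map_smul, zero_sub]
  have h := Submodule.smul_top_le_comap_smul_top _ (totalDiff d) hp'
  rwa [Submodule.mem_comap, e, neg_mem_iff] at h

theorem lof_mem_range_sup_of_totalDiff_mem
    (hexact : ∀ i, LinearMap.ker (d i) = LinearMap.range (d (i + 1)))
    {rs : List S} (hrs : IsWeaklyRegular (⨁ i, K i) rs) {i : ℕ} (hi : rs.length ≤ i)
    (z : K (i + 1))
    (hz : totalDiff d (lof S ℕ K (i + 1) z) ∈ Ideal.ofList rs • (⊤ : Submodule S (⨁ i, K i))) :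
    lof S ℕ K (i + 1) z ∈ LinearMap.range (totalDiff d) ⊔ Ideal.ofList rs • ⊤ := by
  induction rs using List.reverseRecOn generalizing i z with
  | nil =>
    simp only [Ideal.ofList_nil, Submodule.bot_smul, Submodule.mem_bot, totalDiff_lof_succ] at hz
    obtain ⟨u, rfl⟩ : z ∈ LinearMap.range (d (i + 1)) := by
      rw [← hexact]
      exact of_injective (β := K) i (by simpa [lof_eq_of] using hz)
    exact Submodule.mem_sup_left ⟨lof S ℕ K (i + 2) u, by simp⟩
  | append_singleton rs r ih =>
    have hrs' := ((isWeaklyRegular_append_iff _ _ _).mp hrs).1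
    rw [List.length_append, List.length_singleton] at hi
    obtain ⟨i, rfl⟩ : ∃ i', i = i' + 1 := ⟨i - 1, by omega⟩
    have hi' : rs.length ≤ i := by omega
    obtain ⟨p, hzp, hp⟩ :=
      exists_sub_smul_mem_of_totalDiff_mem (totalDiff_totalDiff fun i => (hexact i).ge) hrs z hz
    obtain ⟨u, hu⟩ := (lof_mem_range_sup_iff _ _ _).mp (ih hrs' hi' p hp)
    have hzu := ih hrs' (hi'.trans i.le_succ) (z - r • u) (by
      have e : totalDiff d (lof S ℕ K (i + 2) (z - r • u)) =
          lof S ℕ K (i + 1) (d (i + 1) z - r • p) + r • lof S ℕ K (i + 1) (p - d (i + 1) u) := by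
        simp only [totalDiff_lof_succ, map_sub, map_smul, smul_sub]
        abel
      rw [e]
      exact add_mem hzp (Submodule.smul_mem _ _ ((lof_mem_smul_top_iff _ _ _).mpr hu)))
    refine mem_sup_ofList_append_smul_top (y := lof S ℕ K (i + 2) u) ?_
    rwa [← map_smul, ← map_sub]

section

variable {ι : Type*} {τ : ι → ∀ i, K i →ₗ[S] K (i + 1)} {g : ι → S}

theorem exists_lof_sub_prod_mem_range_sup
    (hexact : ∀ i, LinearMap.ker (d i) = LinearMap.range (d (i + 1)))
    (hT : ∀ a, totalDiff d * totalShift (τ a) + totalShift (τ a) * totalDiff d = g a • 1)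
    {l : List ι} (hl : IsWeaklyRegular (⨁ i, K i) (l.map g)) {m : ℕ} (hm : l.length = m)
    (z : K m)
    (hz : totalDiff d (lof S ℕ K m z) ∈ Ideal.ofList (l.map g) • (⊤ : Submodule S (⨁ i, K i))) :
    ∃ x : K 0, lof S ℕ K m z - (l.map fun a => totalShift (τ a)).prod (lof S ℕ K 0 x) ∈
      LinearMap.range (totalDiff d) ⊔ Ideal.ofList (l.map g) • ⊤ := by
  induction l using List.reverseRecOn generalizing m z with
  | nil =>
    subst hm
    exact ⟨z, by simp⟩
  | append_singleton l a ih =>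
    obtain rfl : m = l.length + 1 := by simpa using hm.symm
    simp only [List.map_append, List.map_singleton] at hl hz
    rw [show (l ++ [a]).map g = l.map g ++ [g a] by simp]
    have hl' := ((isWeaklyRegular_append_iff _ _ _).mp hl).1
    set ε := (-1 : ℤ) ^ l.length
    have hεε : ∀ v : ⨁ i, K i, ε • ε • v = v := neg_one_pow_zsmul_zsmul _
    obtain ⟨y, hzy, hy⟩ :=
      exists_sub_smul_mem_of_totalDiff_mem (totalDiff_totalDiff fun i => (hexact i).ge) hl z hz
    obtain ⟨x, hx⟩ := ih hl' rfl y hy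
    obtain ⟨t₁, ht₁⟩ := exists_prod_totalShift_lof_eq τ l (zero_add l.length) x
    obtain ⟨t, ht⟩ := exists_prod_totalShift_lof_eq τ (l ++ [a]) (j := l.length + 1) (by simp) x
    rw [ht₁, ← map_sub, lof_mem_range_sup_iff] at hx
    obtain ⟨u, hu⟩ := hx
    have key := apply_prod_append_sub_mem hT l a (totalDiff_lof_zero x)
    rw [ht, ht₁, totalDiff_lof_succ] at key
    -- `z - ε • t - g a • u` is a cycle modulo `G_l` in degree `|l| + 1 > |l|`, so a boundary.
    have hDA : totalDiff d (lof S ℕ K (l.length + 1) (z - ε • t - g a • u)) ∈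
        Ideal.ofList (l.map g) • (⊤ : Submodule S (⨁ i, K i)) := by
      have e : totalDiff d (lof S ℕ K (l.length + 1) (z - ε • t - g a • u)) =
          lof S ℕ K l.length (d l.length z - g a • y) +
            g a • lof S ℕ K l.length (y - t₁ - d l.length u) -
            ε • (lof S ℕ K l.length (d l.length t) - ε • g a • lof S ℕ K l.length t₁) := by
        simp only [totalDiff_lof_succ, map_sub, map_smul, map_zsmul, smul_sub, hεε]
        abel
      rw [e]
      exact sub_mem (add_mem hzy (Submodule.smul_mem _ _ ((lof_mem_smul_top_iff _ _ _).mpr hu)))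
        (Submodule.smul_of_tower_mem _ ε key)
    have hA := lof_mem_range_sup_of_totalDiff_mem hexact hl' (by simp) _ hDA
    refine ⟨ε • x, mem_sup_ofList_append_smul_top (y := lof S ℕ K (l.length + 1) u) ?_⟩
    rwa [map_zsmul, map_zsmul, ht, ← map_zsmul, ← map_smul, ← map_sub, ← map_sub]

section

variable {c : ℕ} {l : List ι} {W : ∀ j, K j →ₗ[S] K (c + 1 + j)}

theorem quotMap_comp_quotMap_eq_zsmul
    (hT : ∀ a, totalDiff d * totalShift (τ a) + totalShift (τ a) * totalDiff d = g a • 1)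
    (hm : l.length = c + 1)
    (hW : ∀ j y, lof S ℕ K (c + 1 + j) (W j y) =
      (l.map fun a => totalShift (τ a)).prod (lof S ℕ K j y)) (j : ℕ) :
    quotMap (Ideal.ofList (l.map g)) (d (c + 1 + j)) ∘ₗ quotMap (Ideal.ofList (l.map g)) (W (j + 1))
      = ((-1 : ℤ) ^ (c + 1)) •
        (quotMap (Ideal.ofList (l.map g)) (W j) ∘ₗ quotMap (Ideal.ofList (l.map g)) (d j)) := by
  rw [quotMap_comp, quotMap_comp, quotMap_zsmul]
  refine quotMap_eq_of_sub_mem _ fun x => (lof_mem_smul_top_iff _ (c + 1 + j) _).mp ?_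
  have h := apply_prod_sub_zsmul_prod_apply_mem hT l (lof S ℕ K (j + 1) x)
  have e : totalDiff d (lof S ℕ K (c + 1 + (j + 1)) (W (j + 1) x)) =
      lof S ℕ K (c + 1 + j) (d (c + 1 + j) (W (j + 1) x)) := totalDiff_lof_succ _ _
  simpa [← hW, hm, e] using h

theorem quotMap_comp_quotMap_zero_eq_zero
    (hT : ∀ a, totalDiff d * totalShift (τ a) + totalShift (τ a) * totalDiff d = g a • 1)
    (hW : ∀ j y, lof S ℕ K (c + 1 + j) (W j y) =
      (l.map fun a => totalShift (τ a)).prod (lof S ℕ K j y)) :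
    quotMap (Ideal.ofList (l.map g)) (d c) ∘ₗ quotMap (Ideal.ofList (l.map g)) (W 0) = 0 := by
  rw [quotMap_comp]
  refine quotMap_eq_zero_of_mem _ fun x => (lof_mem_smul_top_iff _ c _).mp ?_
  simpa [← hW] using apply_prod_sub_zsmul_prod_apply_mem hT l (lof S ℕ K 0 x)

theorem quotMap_comp_quotMap_mem_range
    (hT : ∀ a, totalDiff d * totalShift (τ a) + totalShift (τ a) * totalDiff d = g a • 1)
    (hm : l.length = c + 1)
    (hW : ∀ j y, lof S ℕ K (c + 1 + j) (W j y) =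
      (l.map fun a => totalShift (τ a)).prod (lof S ℕ K j y)) (x) :
    quotMap (Ideal.ofList (l.map g)) (W 0) (quotMap (Ideal.ofList (l.map g)) (d 0) x) ∈
      LinearMap.range (quotMap (Ideal.ofList (l.map g)) (d (c + 1))) := by
  refine ⟨((-1 : ℤ) ^ (c + 1)) • quotMap _ (W 1) x, ?_⟩
  have h := LinearMap.congr_fun (quotMap_comp_quotMap_eq_zsmul hT hm hW 0) x
  rw [map_zsmul]
  exact (congrArg _ h).trans (neg_one_pow_zsmul_zsmul _ _)

theorem exists_sub_quotMap_mem_range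
    (hexact : ∀ i, LinearMap.ker (d i) = LinearMap.range (d (i + 1)))
    (hT : ∀ a, totalDiff d * totalShift (τ a) + totalShift (τ a) * totalDiff d = g a • 1)
    (hl : IsWeaklyRegular (⨁ i, K i) (l.map g)) (hm : l.length = c + 1)
    (hW : ∀ j y, lof S ℕ K (c + 1 + j) (W j y) =
      (l.map fun a => totalShift (τ a)).prod (lof S ℕ K j y))
    (z) (hz : quotMap (Ideal.ofList (l.map g)) (d c) z = 0) :
    ∃ x, z - quotMap (Ideal.ofList (l.map g)) (W 0) x ∈
      LinearMap.range (quotMap (Ideal.ofList (l.map g)) (d (c + 1))) := by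
  obtain ⟨z, rfl⟩ := Submodule.Quotient.mk_surjective _ z
  rw [quotMap_mk, Submodule.Quotient.mk_eq_zero, ← lof_mem_smul_top_iff, ← totalDiff_lof_succ]
    at hz
  obtain ⟨x, hx⟩ := exists_lof_sub_prod_mem_range_sup hexact hT hl hm z hz
  rw [← hW, ← map_sub, lof_mem_range_sup_iff] at hx
  refine ⟨Submodule.Quotient.mk x, ?_⟩
  rwa [quotMap_mk, ← Submodule.Quotient.mk_sub, mk_mem_range_quotMap_iff]

theorem mem_range_quotMap_of_quotMap_mem_range
    (hd : ∀ i, LinearMap.range (d (i + 1)) ≤ LinearMap.ker (d i))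
    (hT : ∀ a, totalDiff d * totalShift (τ a) + totalShift (τ a) * totalDiff d = g a • 1)
    (hl : IsWeaklyRegular (⨁ i, K i) (l.map g))
    (hW : ∀ j y, lof S ℕ K (c + 1 + j) (W j y) =
      (l.map fun a => totalShift (τ a)).prod (lof S ℕ K j y))
    (x) (hx : quotMap (Ideal.ofList (l.map g)) (W 0) x ∈
      LinearMap.range (quotMap (Ideal.ofList (l.map g)) (d (c + 1)))) :
    x ∈ LinearMap.range (quotMap (Ideal.ofList (l.map g)) (d 0)) := by
  obtain ⟨x, rfl⟩ := Submodule.Quotient.mk_surjective _ x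
  rw [quotMap_mk, mk_mem_range_quotMap_iff] at hx
  have hPx := (lof_mem_range_sup_iff _ (c + 1 + 0) (W 0 x)).mpr hx
  rw [hW] at hPx
  rw [mk_mem_range_quotMap_iff, ← lof_mem_range_sup_iff]
  exact mem_range_sup_of_prod_mem hT (totalDiff_totalDiff hd) hl (totalDiff_lof_zero x) hPx

end

end

end Totalization

theorem wedge_alpha_induces_iso_H0_to_Hc
    (S : Type*) [CommRing S]
    (c : ℕ) (g : Fin (c + 1) → S)
    (hg : RingTheory.Sequence.IsRegular S (List.ofFn g))
    -- the Koszul complex `K` of `f 1, …, f n`: an `S`-free resolution of `M = S/(f)`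
    (K : ℕ → Type*) [∀ i, AddCommGroup (K i)] [∀ i, Module S (K i)]
    [∀ i, Module.Free S (K i)]
    (d : ∀ i : ℕ, K (i + 1) →ₗ[S] K i)
    (hexact : ∀ i, LinearMap.ker (d i) = LinearMap.range (d (i + 1)))
    -- the homotopies `τ j` for multiplication by `g j` on `K` (wedge with the columns
    -- of `A`)
    (τ : Fin (c + 1) → ∀ i : ℕ, K i →ₗ[S] K (i + 1))
    (hτ : ∀ j i, (d (i + 1)) ∘ₗ (τ j (i + 1)) + (τ j i) ∘ₗ (d i) = g j • LinearMap.id)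
    (hτ0 : ∀ j, (d 0) ∘ₗ (τ j 0) = g j • LinearMap.id)
    -- `w` is multiplication by `α`: the composition `τ 1 ∘ ⋯ ∘ τ (c+1)`
    (w : ∀ j : ℕ, K j →ₗ[S] K (c + 1 + j))
    (hw : ∀ j, w j = (castK (by simp; omega) :
        K (j + (List.finRange (c + 1)).length) →ₗ[S] K (c + 1 + j)) ∘ₗ
      compUp τ (List.finRange (c + 1)) j) :
    -- the reduction of `w` modulo `(g)` is a morphism of complexes
    -- `R ⊗ K → (R ⊗ K)[−(c+1)]` (with sign `(−1)^{c+1}`) ...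
    (∀ j : ℕ,
      (quotMap (Ideal.span (Set.range g)) (d (c + 1 + j))) ∘ₗ
          (quotMap (Ideal.span (Set.range g)) (w (j + 1)))
        = ((-1 : ℤ) ^ (c + 1)) •
            ((quotMap (Ideal.span (Set.range g)) (w j)) ∘ₗ
              (quotMap (Ideal.span (Set.range g)) (d j)))) ∧
    -- ... which induces an isomorphism `M = H₀(R ⊗ K) ≅ H_{c+1}(R ⊗ K)`:
    -- it sends `H₀` into cycles,
    ((quotMap (Ideal.span (Set.range g)) (d c)) ∘ₗ
        (quotMap (Ideal.span (Set.range g)) (w 0)) = 0) ∧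
    -- boundaries to boundaries,
    (∀ x, (quotMap (Ideal.span (Set.range g)) (w 0))
        ((quotMap (Ideal.span (Set.range g)) (d 0)) x)
      ∈ LinearMap.range (quotMap (Ideal.span (Set.range g)) (d (c + 1)))) ∧
    -- surjectively onto `H_{c+1}`,
    (∀ z, (quotMap (Ideal.span (Set.range g)) (d c)) z = 0 →
      ∃ x, z - (quotMap (Ideal.span (Set.range g)) (w 0)) x
        ∈ LinearMap.range (quotMap (Ideal.span (Set.range g)) (d (c + 1)))) ∧
    -- and injectively on `H₀`
    (∀ x, (quotMap (Ideal.span (Set.range g)) (w 0)) x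
        ∈ LinearMap.range (quotMap (Ideal.span (Set.range g)) (d (c + 1))) →
      x ∈ LinearMap.range (quotMap (Ideal.span (Set.range g)) (d 0))) := by
  have hI : Ideal.span (Set.range g) = Ideal.ofList ((List.finRange (c + 1)).map g) := by
    rw [← List.ofFn_eq_map]
    exact congrArg _ (Set.ext fun r => (List.mem_ofFn' g r).symm)
  have hl : IsWeaklyRegular (⨁ i, K i) ((List.finRange (c + 1)).map g) := by
    rw [← List.ofFn_eq_map]
    exact hg.toIsWeaklyRegular.of_flat_module
  have hT a := totalDiff_mul_totalShift_add (hτ a) (hτ0 a)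
  have hm : (List.finRange (c + 1)).length = c + 1 := List.length_finRange
  have hW j y : lof S ℕ K (c + 1 + j) (w j y) =
      ((List.finRange (c + 1)).map fun a => totalShift (τ a)).prod (lof S ℕ K j y) := by
    rw [hw, LinearMap.comp_apply, lof_castK, lof_compUp]
  rw [hI]
  exact ⟨quotMap_comp_quotMap_eq_zsmul hT hm hW, quotMap_comp_quotMap_zero_eq_zero hT hW,
    quotMap_comp_quotMap_mem_range hT hm hW, exists_sub_quotMap_mem_range hexact hT hl hm hW,
    mem_range_quotMap_of_quotMap_mem_range (fun i => (hexact i).ge) hT hl hW⟩
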